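/- If a homogeneous polynomial p ∈ ℝ[x₁,…,xₙ] is hyperbolic with respect to e ∈ ℝⁿ, then p is hyperbolic with respect to every point y in the hyperbolicity cone K(p,e). -/

import Mathlib

open Polynomial MvPolynomial

/-- A homogeneous polynomial `p` is hyperbolic with respect to `e` if `p(e) > 0` and for
every `x` the univariate polynomial `t ↦ p(te + x)` has only real roots. -/
def Hyperbolic {n : ℕ} (p : MvPolynomial (Fin n) ℝ) (e : Fin n → ℝ) : Prop :=
  0 < MvPolynomial.eval e p ∧
    ∀ x : Fin n → ℝ, ∀ z : ℂ,
      Polynomial.aeval z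
        (MvPolynomial.aeval
          (fun i => Polynomial.C (x i) + Polynomial.C (e i) * Polynomial.X) p) = 0 →
      z.im = 0

/-- The hyperbolicity cone `K(p, e)`: the connected component of
`{x : p(x) ≠ 0}` containing `e`. -/
def hypCone {n : ℕ} (p : MvPolynomial (Fin n) ℝ) (e : Fin n → ℝ) : Set (Fin n → ℝ) :=
  connectedComponentIn {x : Fin n → ℝ | MvPolynomial.eval x p ≠ 0} e

/-!
Gårding's argument. Fix `x`, `α > 0`, put `c = x + iαe`, and let `U` be the set of real
directions `w` with `p(w) ≠ 0` such that `z ↦ p(c + zw)` has no zero in the closed upper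
half-plane. `U` contains `e` by hyperbolicity, and it is open: homogeneity keeps the zeros
locally uniformly bounded, so a compactness argument applies. Since `t ↦ p(c + tw)` has
leading coefficient `p(w)`, factoring it shows `|p(w)| (Im z)^d ≤ |p(c + zw)|` for `w ∈ U`
and `Im z ≥ 0`. This inequality is a closed condition, and on the cone it forces membership
in `U`, because real zeros are excluded by hyperbolicity in direction `e`. Hence the
connected cone lies in `U`. Letting `α → 0` in the inequality gives `p(x + zy) ≠ 0` for
`Im z > 0`; conjugation handles `Im z < 0`.
-/

open Filter Topology

theorem Polynomial.norm_leadingCoeff_mul_im_pow_le_norm_eval {q : ℂ[X]}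
    (hq : ∀ r ∈ q.roots, r.im ≤ 0) {z : ℂ} (hz : 0 ≤ z.im) :
    ‖q.leadingCoeff‖ * z.im ^ q.natDegree ≤ ‖q.eval z‖ := by
  have hcard : Multiset.card q.roots = q.natDegree := IsAlgClosed.card_roots_eq_natDegree
  conv_rhs => rw [← C_leadingCoeff_mul_prod_multiset_X_sub_C hcard]
  rw [Polynomial.eval_mul, Polynomial.eval_C, eval_multiset_prod, Multiset.map_map, norm_mul,
    show ∀ s : Multiset ℂ, ‖s.prod‖ = (s.map norm).prod from
      map_multiset_prod (normHom : ℂ →*₀ ℝ), Multiset.map_map]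
  gcongr
  calc z.im ^ q.natDegree = (q.roots.map fun _ => z.im).prod := by
        rw [Multiset.map_const', Multiset.prod_replicate, hcard]
    _ ≤ _ := Multiset.prod_map_le_prod_map₀ _ _ (fun _ _ => hz) fun r hr => by
        calc z.im ≤ (z - r).im := by simp [hq r hr]
          _ ≤ ‖z - r‖ := Complex.im_le_norm _
          _ = _ := by simp

theorem Finsupp.prod_pow_eq_prod_map_toMultiset {σ M : Type*} [CommMonoid M] (m : σ →₀ ℕ)
    (g : σ → M) : (m.prod fun i k => g i ^ k) = (m.toMultiset.map g).prod := by
  rw [Finsupp.toMultiset_map, Finsupp.prod_toMultiset, Finsupp.prod_mapDomain_index] <;>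
    simp [pow_add]

theorem MvPolynomial.continuous_aeval {σ R A : Type*} [CommSemiring R] [CommSemiring A]
    [Algebra R A] [TopologicalSpace A] [IsTopologicalSemiring A] (p : MvPolynomial σ R) :
    Continuous fun v : σ → A => MvPolynomial.aeval v p := by
  simpa [MvPolynomial.eval_map, MvPolynomial.aeval_def] using
    continuous_eval (p.map (algebraMap R A))

theorem MvPolynomial.aeval_ofReal {σ : Type*} (p : MvPolynomial σ ℝ) (w : σ → ℝ) :
    MvPolynomial.aeval (fun i => (w i : ℂ)) p = MvPolynomial.eval w p := by
  simpa using (MvPolynomial.comp_aeval_apply w (Algebra.ofId ℝ ℂ) p).symm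

theorem MvPolynomial.aeval_conj {σ : Type*} (p : MvPolynomial σ ℝ) (v : σ → ℂ) :
    MvPolynomial.aeval (fun i => (starRingEnd ℂ) (v i)) p =
      (starRingEnd ℂ) (MvPolynomial.aeval v p) :=
  (MvPolynomial.comp_aeval_apply v Complex.conjAe.toAlgHom p).symm

section Homogeneous

variable {σ R : Type*} [CommSemiring R] {p : MvPolynomial σ R} {d : ℕ}

theorem MvPolynomial.IsHomogeneous.aeval_smul {A : Type*} [CommSemiring A] [Algebra R A]
    (hp : p.IsHomogeneous d) (t : A) (v : σ → A) :
    MvPolynomial.aeval (t • v) p = t ^ d * MvPolynomial.aeval v p := by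
  conv_lhs => rw [p.as_sum]
  conv_rhs => rw [p.as_sum]
  simp only [map_sum, Finset.mul_sum, aeval_monomial]
  refine Finset.sum_congr rfl fun m hm => ?_
  rw [← hp (mem_support_iff.mp hm), Finsupp.weight_apply]
  simp only [Pi.smul_apply, smul_eq_mul, mul_pow, Finsupp.prod, Finsupp.sum, Pi.one_apply,
    mul_one, Finset.prod_mul_distrib, Finset.prod_pow_eq_pow_sum]
  ring

theorem MvPolynomial.IsHomogeneous.natDegree_aeval_le_and_coeff {A : Type*} [CommSemiring A]
    [Algebra R A] (hp : p.IsHomogeneous d) {f : σ → A[X]} (hf : ∀ i, (f i).natDegree ≤ 1) :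
    (MvPolynomial.aeval f p).natDegree ≤ d ∧
      (MvPolynomial.aeval f p).coeff d = MvPolynomial.aeval (fun i => (f i).coeff 1) p := by
  have hmon : ∀ m : σ →₀ ℕ, (m.prod fun i k => f i ^ k).natDegree ≤ m.degree ∧
      (m.prod fun i k => f i ^ k).coeff m.degree = m.prod fun i k => (f i).coeff 1 ^ k := by
    intro m
    have hcard : m.degree = Multiset.card (m.toMultiset.map f) * 1 := by
      simp [Finsupp.card_toMultiset, Finsupp.degree_apply, Finsupp.sum]
    have hf' : ∀ q ∈ m.toMultiset.map f, q.natDegree ≤ 1 := by simpa using fun i _ => hf i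
    rw [Finsupp.prod_pow_eq_prod_map_toMultiset, Finsupp.prod_pow_eq_prod_map_toMultiset, hcard,
      coeff_multiset_prod_of_natDegree_le _ _ hf', Multiset.map_map]
    refine ⟨(natDegree_multiset_prod_le _).trans ?_, rfl⟩
    simpa using Multiset.sum_le_card_nsmul ((m.toMultiset.map f).map natDegree) 1
      (by simpa using fun i _ => hf i)
  have hdeg : ∀ m ∈ p.support, m.degree = d := fun m hm => by
    rw [Finsupp.degree_eq_weight_one]; exact hp (mem_support_iff.mp hm)
  rw [p.as_sum]
  simp only [map_sum, aeval_monomial, Polynomial.algebraMap_apply, finsetSum_coeff,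
    Polynomial.coeff_C_mul]
  refine ⟨natDegree_sum_le_of_forall_le _ _ fun m hm => ?_, Finset.sum_congr rfl fun m hm => ?_⟩
  · exact (natDegree_C_mul_le _ _).trans ((hmon m).1.trans (hdeg m hm).le)
  · rw [← hdeg m hm, (hmon m).2]

variable [Algebra R ℂ]

theorem MvPolynomial.IsHomogeneous.norm_aeval_mul_im_pow_le (hp : p.IsHomogeneous d)
    {c w : σ → ℂ} (hroots : ∀ z : ℂ, 0 < z.im → MvPolynomial.aeval (c + z • w) p ≠ 0)
    {z : ℂ} (hz : 0 ≤ z.im) :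
    ‖MvPolynomial.aeval w p‖ * z.im ^ d ≤ ‖MvPolynomial.aeval (c + z • w) p‖ := by
  set q : ℂ[X] :=
    MvPolynomial.aeval (fun i => Polynomial.C (w i) * Polynomial.X + Polynomial.C (c i)) p
  have hq : ∀ z, q.eval z = MvPolynomial.aeval (c + z • w) p := fun z => by
    have := MvPolynomial.comp_aeval_apply
      (fun i => Polynomial.C (w i) * Polynomial.X + Polynomial.C (c i))
      ((Polynomial.aeval z).restrictScalars R) p
    simp only [AlgHom.restrictScalars_apply, Polynomial.coe_aeval_eq_eval, Polynomial.eval_add,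
      Polynomial.eval_mul, Polynomial.eval_C, Polynomial.eval_X] at this
    rw [this]
    congr 2
    ext i
    simp only [Pi.add_apply, Pi.smul_apply, smul_eq_mul]
    ring
  obtain ⟨hdeg, hcoeff⟩ := hp.natDegree_aeval_le_and_coeff
    (f := fun i => Polynomial.C (w i) * Polynomial.X + Polynomial.C (c i))
    fun _ => natDegree_linear_le
  have hlin : (fun i => (Polynomial.C (w i) * Polynomial.X + Polynomial.C (c i)).coeff 1) = w := by
    ext; simp
  rw [hlin] at hcoeff
  rcases eq_or_ne (MvPolynomial.aeval w p) 0 with h0 | h0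
  · simp [h0]
  have hnat : q.natDegree = d := le_antisymm hdeg (le_natDegree_of_ne_zero (hcoeff ▸ h0))
  have hlead : q.leadingCoeff = MvPolynomial.aeval w p := by rw [leadingCoeff, hnat, hcoeff]
  rw [← hlead, ← hnat, ← hq]
  refine q.norm_leadingCoeff_mul_im_pow_le_norm_eval (fun r hr => ?_) hz
  by_contra! hr'
  exact hroots r hr' (hq r ▸ (mem_roots'.mp hr).2)

theorem MvPolynomial.IsHomogeneous.isOpen_setOf_forall_aeval_add_smul_ne_zero
    (hp : p.IsHomogeneous d) (c : σ → ℂ) {F : Set ℂ} (hF : IsClosed F) :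
    IsOpen {w : σ → ℂ | MvPolynomial.aeval w p ≠ 0 ∧
      ∀ z ∈ F, MvPolynomial.aeval (c + z • w) p ≠ 0} := by
  rw [isOpen_iff_mem_nhds]
  rintro w₀ ⟨hw₀, hF₀⟩
  have hnear : ∀ᶠ q : (σ → ℂ) × (σ → ℂ) in 𝓝 0 ×ˢ 𝓝 w₀,
      MvPolynomial.aeval (q.1 + q.2) p ≠ 0 := by
    rw [← nhds_prod_eq]
    exact ((continuous_aeval p).comp continuous_add).continuousAt.eventually_ne
      (by simpa using hw₀)
  obtain ⟨small, hsmall, near, hnear, hne⟩ := eventually_prod_iff.mp hnear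
  obtain ⟨ρ, -, hρ⟩ := (Metric.hasBasis_cobounded_compl_closedBall (0 : ℂ)).eventually_iff.mp
    ((tendsto_inv₀_cobounded.smul_const c).eventually (by simpa using hsmall))
  have htube : ∀ᶠ w in 𝓝 w₀, ∀ z ∈ F ∩ Metric.closedBall 0 ρ,
      MvPolynomial.aeval (c + z • w) p ≠ 0 :=
    ((isCompact_closedBall 0 ρ).inter_left hF).eventually_forall_of_forall_eventually
      fun z hz => (((continuous_aeval p).comp
        (continuous_const.add (continuous_snd.smul continuous_fst))).continuousAt
          (x := (w₀, z))).eventually_ne (hF₀ z hz.1)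
  filter_upwards [hnear, htube] with w hw hwtube
  refine ⟨by simpa using hne hsmall.self_of_nhds hw, fun z hz => ?_⟩
  rcases eq_or_ne z 0 with rfl | hz0
  · simpa using hF₀ 0 hz
  by_cases hzρ : z ∈ Metric.closedBall 0 ρ
  · exact hwtube z ⟨hz, hzρ⟩
  · rw [show c + z • w = z • (z⁻¹ • c + w) by rw [smul_add, smul_inv_smul₀ hz0], hp.aeval_smul]
    exact mul_ne_zero (pow_ne_zero _ hz0) (hne (hρ hzρ) hw)

end Homogeneous

section ZeroFreeDirections

variable {σ : Type*} {p : MvPolynomial σ ℝ} {d : ℕ}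

def zeroFreeDirections (p : MvPolynomial σ ℝ) (c : σ → ℂ) : Set (σ → ℝ) :=
  {w | MvPolynomial.aeval (fun i => (w i : ℂ)) p ≠ 0 ∧
    ∀ z : ℂ, 0 ≤ z.im → MvPolynomial.aeval (c + z • fun i => (w i : ℂ)) p ≠ 0}

theorem continuous_ofReal_comp : Continuous fun w : σ → ℝ => fun i => (w i : ℂ) :=
  continuous_pi fun i => Complex.continuous_ofReal.comp (continuous_apply i)

theorem isOpen_zeroFreeDirections (hp : p.IsHomogeneous d) (c : σ → ℂ) :
    IsOpen (zeroFreeDirections p c) :=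
  (hp.isOpen_setOf_forall_aeval_add_smul_ne_zero c
    (isClosed_le continuous_const Complex.continuous_im)).preimage continuous_ofReal_comp

theorem closure_zeroFreeDirections_inter_subset (hp : p.IsHomogeneous d) {c : σ → ℂ}
    (hreal : ∀ (w : σ → ℝ) (t : ℝ), MvPolynomial.aeval (c + (t : ℂ) • fun i => (w i : ℂ)) p ≠ 0) :
    closure (zeroFreeDirections p c) ∩ {w | MvPolynomial.eval w p ≠ 0} ⊆
      zeroFreeDirections p c := by
  set T := {w : σ → ℝ | ∀ z : ℂ, 0 ≤ z.im →
    ‖MvPolynomial.aeval (fun i => (w i : ℂ)) p‖ * z.im ^ d ≤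
      ‖MvPolynomial.aeval (c + z • fun i => (w i : ℂ)) p‖}
  have hT : IsClosed T := by
    simp only [T, Set.ofPred_forall]
    refine isClosed_iInter fun z => isClosed_iInter fun _ => isClosed_le ?_ ?_
    · exact ((continuous_aeval p).comp continuous_ofReal_comp).norm.mul continuous_const
    · exact ((continuous_aeval p).comp
        (continuous_const.add (continuous_ofReal_comp.const_smul z))).norm
  have hUT : zeroFreeDirections p c ⊆ T := fun w hw z hz =>
    hp.norm_aeval_mul_im_pow_le (fun z hz => hw.2 z hz.le) hz
  rintro w ⟨hwc, hw⟩
  have hw' : MvPolynomial.aeval (fun i => (w i : ℂ)) p ≠ 0 := by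
    rw [MvPolynomial.aeval_ofReal]; exact_mod_cast hw
  refine ⟨hw', fun z hz => ?_⟩
  rcases hz.eq_or_lt with hz0 | hzpos
  · rw [show z = (z.re : ℂ) from Complex.ext rfl (by simp [hz0])]
    exact hreal w z.re
  · intro h0
    have hle := closure_minimal hUT hT hwc z hzpos.le
    rw [h0, norm_zero] at hle
    have : 0 < ‖MvPolynomial.aeval (fun i => (w i : ℂ)) p‖ * z.im ^ d := by positivity
    linarith

end ZeroFreeDirections

section Hyperbolic

variable {n d : ℕ} {p : MvPolynomial (Fin n) ℝ} {e y : Fin n → ℝ}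

theorem hyperbolic_iff : Hyperbolic p e ↔ 0 < MvPolynomial.eval e p ∧
    ∀ (x : Fin n → ℝ) (z : ℂ),
      MvPolynomial.aeval (fun i => (x i : ℂ) + z * e i) p = 0 → z.im = 0 := by
  have bridge : ∀ (x : Fin n → ℝ) (z : ℂ),
      Polynomial.aeval z (MvPolynomial.aeval
        (fun i => Polynomial.C (x i) + Polynomial.C (e i) * Polynomial.X) p) =
      MvPolynomial.aeval (fun i => (x i : ℂ) + z * e i) p := fun x z => by
    rw [MvPolynomial.comp_aeval_apply]
    congr 2
    ext i
    simp only [map_add, map_mul, Polynomial.aeval_C, Polynomial.aeval_X, Complex.coe_algebraMap]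
    ring
  simp only [Hyperbolic, bridge]

theorem aeval_ofReal_ne_zero_of_mem_hypCone (hy : y ∈ hypCone p e) :
    MvPolynomial.aeval (fun i => (y i : ℂ)) p ≠ 0 := by
  rw [MvPolynomial.aeval_ofReal]
  exact_mod_cast connectedComponentIn_subset _ _ hy

theorem Hyperbolic.eval_pos_of_mem_hypCone (he : Hyperbolic p e) (hy : y ∈ hypCone p e) :
    0 < MvPolynomial.eval y p := by
  by_contra! hle
  obtain ⟨w, hwK, hw0⟩ := isPreconnected_connectedComponentIn.intermediate_value hy
    (mem_connectedComponentIn he.1.ne') (continuous_eval p).continuousOn ⟨hle, he.1.le⟩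
  exact connectedComponentIn_subset _ _ hwK hw0

theorem Hyperbolic.aeval_add_I_mul_ne_zero_of_mem_hypCone (hp : p.IsHomogeneous d)
    (he : Hyperbolic p e) (x : Fin n → ℝ) {α : ℝ} (hα : 0 < α) (hy : y ∈ hypCone p e)
    {z : ℂ} (hz : 0 ≤ z.im) :
    MvPolynomial.aeval (fun i => (x i : ℂ) + α * Complex.I * e i + z * y i) p ≠ 0 := by
  have he' := (hyperbolic_iff.mp he).2
  set c : Fin n → ℂ := fun i => (x i : ℂ) + α * Complex.I * e i
  have hreal : ∀ (w : Fin n → ℝ) (t : ℝ),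
      MvPolynomial.aeval (c + (t : ℂ) • fun i => (w i : ℂ)) p ≠ 0 := by
    intro w t h
    have him := he' (x + t • w) (α * Complex.I) (by
      convert h using 3
      ext i
      simp only [Pi.add_apply, Pi.smul_apply, smul_eq_mul, Complex.ofReal_add, Complex.ofReal_mul,
        c]
      ring)
    simp [hα.ne'] at him
  have heU : e ∈ zeroFreeDirections p c := by
    refine ⟨aeval_ofReal_ne_zero_of_mem_hypCone (mem_connectedComponentIn he.1.ne'),
      fun z hz h => ?_⟩
    have := he' x (α * Complex.I + z) (by
      convert h using 3
      ext i
      simp only [Pi.add_apply, Pi.smul_apply, smul_eq_mul, c]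
      ring)
    simp only [Complex.add_im, Complex.mul_im, Complex.ofReal_re, Complex.I_im, Complex.ofReal_im,
      Complex.I_re, mul_one, mul_zero, add_zero] at this
    linarith
  have hK : hypCone p e ⊆ zeroFreeDirections p c :=
    isPreconnected_connectedComponentIn.subset_of_closure_inter_subset
      (isOpen_zeroFreeDirections hp c) ⟨e, mem_connectedComponentIn he.1.ne', heU⟩
      fun w ⟨hwc, hwK⟩ => closure_zeroFreeDirections_inter_subset hp hreal
        ⟨hwc, connectedComponentIn_subset _ _ hwK⟩
  exact (hK hy).2 z hz

theorem Hyperbolic.aeval_ne_zero_of_mem_hypCone_of_im_pos (hp : p.IsHomogeneous d)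
    (he : Hyperbolic p e) (hy : y ∈ hypCone p e) (x : Fin n → ℝ) {z : ℂ} (hz : 0 < z.im) :
    MvPolynomial.aeval (fun i => (x i : ℂ) + z * y i) p ≠ 0 := by
  have hbound : ∀ α : ℝ, 0 < α → ‖MvPolynomial.aeval (fun i => (y i : ℂ)) p‖ * z.im ^ d ≤
      ‖MvPolynomial.aeval (fun i => (x i : ℂ) + α * Complex.I * e i + z * y i) p‖ :=
    fun α hα => hp.norm_aeval_mul_im_pow_le (c := fun i => (x i : ℂ) + α * Complex.I * e i)
      (fun s hs => he.aeval_add_I_mul_ne_zero_of_mem_hypCone hp x hα hy hs.le) hz.le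
  have hlim : Tendsto (fun α : ℝ =>
      ‖MvPolynomial.aeval (fun i => (x i : ℂ) + α * Complex.I * e i + z * y i) p‖) (𝓝[>] 0)
      (𝓝 ‖MvPolynomial.aeval (fun i => (x i : ℂ) + z * y i) p‖) := by
    have : Continuous fun α : ℝ =>
        ‖MvPolynomial.aeval (fun i => (x i : ℂ) + α * Complex.I * e i + z * y i) p‖ :=
      ((continuous_aeval p).comp (by fun_prop)).norm
    simpa using (this.tendsto 0).mono_left nhdsWithin_le_nhds
  intro h0
  have hle := ge_of_tendsto hlim (eventually_nhdsWithin_of_forall hbound)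
  rw [h0, norm_zero] at hle
  have := aeval_ofReal_ne_zero_of_mem_hypCone hy
  have : 0 < ‖MvPolynomial.aeval (fun i => (y i : ℂ)) p‖ * z.im ^ d := by positivity
  linarith

end Hyperbolic

/-- (Garding) If a homogeneous polynomial `p` is hyperbolic with respect to `e`, then `p`
is hyperbolic with respect to every point of the hyperbolicity cone `K(p, e)`. -/
theorem stmt2 (n d : ℕ) (p : MvPolynomial (Fin n) ℝ) (e : Fin n → ℝ)
    (hhom : p.IsHomogeneous d) (hyp : Hyperbolic p e) :
    ∀ y ∈ hypCone p e, Hyperbolic p y := by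
  intro y hy
  refine hyperbolic_iff.mpr ⟨hyp.eval_pos_of_mem_hypCone hy, fun x z hz => ?_⟩
  by_contra him
  rcases lt_or_gt_of_ne him with hneg | hpos
  · refine hyp.aeval_ne_zero_of_mem_hypCone_of_im_pos hhom hy x
      (z := (starRingEnd ℂ) z) (by simpa using hneg) ?_
    have hconj := MvPolynomial.aeval_conj p (fun i => (x i : ℂ) + z * y i)
    rw [hz, map_zero] at hconj
    simpa using hconj
  · exact hyp.aeval_ne_zero_of_mem_hypCone_of_im_pos hhom hy x hpos hz
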